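/- arXiv:1304.3741 — 6 statements merged into one kernel-verified Lean document; each statement's English description precedes it below -/
import Mathlib

section
/- Fix k, θ > 0 and x > 0. With r(δ) = kθ/(θ−δ) and q(δ) = (θ−δ)/θ, the rescaled negative binomial pmf converges pointwise to the Gamma density: lim_{δ→0⁺} (1/δ) · b(⌊x/δ⌋, r(δ), q(δ)) = x^{k−1} e^{−x/θ} / (Γ(k) θ^k). -/
open Real Filter Topology

/-- The negative binomial pmf `b(n, r, q) = Γ(n+r)/(n! Γ(r)) (1−q)^r q^n`. -/
noncomputable def negBinPMF (r q : ℝ) (n : ℕ) : ℝ :=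
  Real.Gamma (n + r) / (n.factorial * Real.Gamma r) * (1 - q) ^ r * q ^ n

/-!
With `n = ⌊x/δ⌋₊` and `r = kθ/(θ−δ)` we have `1 − q = δ/θ`, hence
`(1/δ) b(n, r, q) = δ^(r−1) · Γ(n+r)/Γ(n+1) · q^n / (Γ(r) θ^r)`.
As `δ → 0⁺`, `nδ → x` and `r → k`, so the last factor tends to `1/(Γ(k) θ^k)` and
`q^n = (1 − δ/θ)^n → e^(−x/θ)`. Log-convexity of `Γ` gives `Γ(n+r) = Γ(n+1) c^(r−1)` for some
`c ∈ [n, n+r]`; then `δ^(r−1) Γ(n+r)/Γ(n+1) = (cδ)^(r−1)` with `cδ → x`, so it tends to `x^(k−1)`.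
-/

namespace Real

theorem slope_log_Gamma_add_one {y : ℝ} (hy : 0 < y) :
    slope (log ∘ Gamma) y (y + 1) = log y := by
  rw [slope_def_field, add_sub_cancel_left, div_one, Function.comp_apply, Function.comp_apply,
    Gamma_add_one hy.ne', log_mul hy.ne' (Gamma_pos_of_pos hy).ne', add_sub_cancel_right]

theorem exists_Gamma_add_eq_Gamma_add_one_mul_rpow {y r : ℝ} (hy : 0 < y) (hr : 0 < r) :
    ∃ c ∈ Set.Icc y (y + r), Gamma (y + r) = Gamma (y + 1) * c ^ (r - 1) := by
  rcases eq_or_ne r 1 with rfl | hr1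
  · exact ⟨y, ⟨le_rfl, by linarith⟩, by simp⟩
  have pos : ∀ {t : ℝ}, 0 < t → t ∈ Set.Ioi (0 : ℝ) := id
  have hconv := convexOn_log_Gamma
  -- `log y` and `log (y + r)` are slopes of `log ∘ Gamma` over unit intervals, and convexity
  -- places the slope over the segment between `y + 1` and `y + r` between them.
  set s := slope (log ∘ Gamma) (y + 1) (y + r) with hs
  have hlow : log y ≤ s := calc
    log y = slope (log ∘ Gamma) (y + 1) y := by rw [slope_comm, slope_log_Gamma_add_one hy]
    _ ≤ s := hconv.slope_mono (pos (by linarith)) ⟨pos hy, by simp⟩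
        ⟨pos (by linarith), by simpa using hr1⟩ (by linarith)
  have hup : s ≤ log (y + r) := calc
    s = slope (log ∘ Gamma) (y + r) (y + 1) := slope_comm _ _ _
    _ ≤ slope (log ∘ Gamma) (y + r) (y + r + 1) :=
      hconv.slope_mono (pos (by linarith)) ⟨pos (by linarith), by simpa [eq_comm] using hr1⟩
        ⟨pos (by linarith), by simp⟩ (by linarith)
    _ = log (y + r) := slope_log_Gamma_add_one (by linarith)
  refine ⟨exp s, ⟨?_, ?_⟩, ?_⟩
  · simpa [exp_log hy] using exp_le_exp.2 hlow
  · simpa [exp_log (by linarith : 0 < y + r)] using exp_le_exp.2 hup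
  · have hr1' : r - 1 ≠ 0 := sub_ne_zero.2 hr1
    have hΓ : 0 < Gamma (y + 1) := Gamma_pos_of_pos (by linarith)
    rw [← exp_mul, hs, slope_def_field, add_sub_add_left_eq_sub, div_mul_cancel₀ _ hr1', exp_sub,
      Function.comp_apply, Function.comp_apply, exp_log (Gamma_pos_of_pos (by linarith)),
      exp_log hΓ, mul_div_cancel₀ _ hΓ.ne']

theorem tendsto_rpow_mul_Gamma_add_div_Gamma_add_one {ι : Type*} {l : Filter ι}
    {δ y r : ι → ℝ} {x k : ℝ} (hx : 0 < x) (hk : 0 < k) (hδ : Tendsto δ l (𝓝[>] 0))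
    (hyδ : Tendsto (fun i ↦ y i * δ i) l (𝓝 x)) (hr : Tendsto r l (𝓝 k)) :
    Tendsto (fun i ↦ δ i ^ (r i - 1) * (Gamma (y i + r i) / Gamma (y i + 1))) l
      (𝓝 (x ^ (k - 1))) := by
  rcases l.eq_or_neBot with rfl | _
  · exact tendsto_bot
  have hδpos : ∀ᶠ i in l, 0 < δ i := hδ.eventually self_mem_nhdsWithin
  have hypos : ∀ᶠ i in l, 0 < y i := by
    filter_upwards [hδpos, hyδ.eventually (lt_mem_nhds hx)] with i hδi hyi
    exact pos_of_mul_pos_left hyi hδi.le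
  have hex : ∀ᶠ i in l, ∃ c ∈ Set.Icc (y i) (y i + r i),
      Gamma (y i + r i) = Gamma (y i + 1) * c ^ (r i - 1) := by
    filter_upwards [hypos, hr.eventually (lt_mem_nhds hk)] with i hyi hri
    exact exists_Gamma_add_eq_Gamma_add_one_mul_rpow hyi hri
  obtain ⟨c, hc⟩ := hex.choice
  have hcδ : Tendsto (fun i ↦ c i * δ i) l (𝓝 x) := by
    have hupper : Tendsto (fun i ↦ (y i + r i) * δ i) l (𝓝 x) := by
      simpa [add_mul] using hyδ.add (hr.mul (tendsto_nhds_of_tendsto_nhdsWithin hδ))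
    refine tendsto_of_tendsto_of_tendsto_of_le_of_le' hyδ hupper ?_ ?_ <;>
      filter_upwards [hc, hδpos] with i hci hδi
    exacts [mul_le_mul_of_nonneg_right hci.1.1 hδi.le, mul_le_mul_of_nonneg_right hci.1.2 hδi.le]
  refine (hcδ.rpow (hr.sub_const 1) (Or.inl hx.ne')).congr' ?_
  filter_upwards [hc, hδpos, hypos] with i hci hδi hyi
  rw [hci.2, mul_div_cancel_left₀ _ (Gamma_pos_of_pos (by linarith)).ne',
    mul_rpow (hyi.le.trans hci.1.1) hδi.le, mul_comm]

theorem tendsto_one_add_mul_pow_exp {ι : Type*} {l : Filter ι} {δ : ι → ℝ} {n : ι → ℕ}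
    {a x : ℝ} (hδ : Tendsto δ l (𝓝[≠] 0)) (hnδ : Tendsto (fun i ↦ n i * δ i) l (𝓝 x)) :
    Tendsto (fun i ↦ (1 + a * δ i) ^ n i) l (𝓝 (exp (x * a))) := by
  have hderiv : HasDerivAt (fun t ↦ log (1 + a * t)) a 0 := by
    simpa using (((hasDerivAt_id (0 : ℝ)).const_mul a).const_add 1).log (by simp)
  have hslope : Tendsto (fun i ↦ (δ i)⁻¹ * log (1 + a * δ i)) l (𝓝 a) := by
    have := hderiv.tendsto_slope_zero
    simp only [zero_add, mul_zero, add_zero, log_one, sub_zero, smul_eq_mul] at this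
    exact this.comp hδ
  have hbase : ∀ᶠ i in l, 0 < 1 + a * δ i := by
    have : Tendsto (fun i ↦ 1 + a * δ i) l (𝓝 1) := by
      simpa using ((tendsto_nhds_of_tendsto_nhdsWithin hδ).const_mul a).const_add 1
    exact this.eventually (lt_mem_nhds one_pos)
  refine ((continuous_exp.tendsto _).comp (hnδ.mul hslope)).congr' ?_
  filter_upwards [hbase, hδ.eventually self_mem_nhdsWithin] with i hi hδi
  rw [Function.comp_apply, mul_assoc, mul_inv_cancel_left₀ hδi, ← log_pow,
    exp_log (pow_pos hi _)]

end Real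

theorem tendsto_natFloor_div_mul_nhdsGT_zero {x : ℝ} (hx : 0 ≤ x) :
    Tendsto (fun δ : ℝ ↦ ⌊x / δ⌋₊ * δ) (𝓝[>] 0) (𝓝 x) :=
  ((tendsto_nat_floor_mul_div_atTop hx).comp tendsto_inv_nhdsGT_zero).congr fun δ ↦ by
    simp [div_eq_mul_inv]

theorem one_div_mul_negBinPMF_sub_div {θ δ : ℝ} (hθ : 0 < θ) (hδ : 0 < δ) (r : ℝ) (n : ℕ) :
    1 / δ * negBinPMF r ((θ - δ) / θ) n =
      δ ^ (r - 1) * (Real.Gamma (n + r) / Real.Gamma (n + 1)) * ((θ - δ) / θ) ^ n /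
        (Real.Gamma r * θ ^ r) := by
  have hq : 1 - (θ - δ) / θ = δ / θ := by field_simp; ring
  rw [negBinPMF, hq, Real.div_rpow hδ.le hθ.le, Real.rpow_sub_one hδ.ne',
    Real.Gamma_nat_eq_factorial]
  field_simp

/-- With `r(δ) = kθ/(θ−δ)` and `q(δ) = (θ−δ)/θ`, the rescaled negative binomial pmf
converges pointwise, as `δ → 0⁺`, to the Gamma(k,θ) density:
`lim_{δ→0⁺} (1/δ) b(⌊x/δ⌋, r(δ), q(δ)) = x^{k−1} e^{−x/θ}/(Γ(k) θ^k)`. -/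
theorem negBin_tendsto_gamma_density (k θ x : ℝ) (hk : 0 < k) (hθ : 0 < θ) (hx : 0 < x) :
    Tendsto (fun δ : ℝ =>
        (1 / δ) * negBinPMF (k * θ / (θ - δ)) ((θ - δ) / θ) ⌊x / δ⌋₊)
      (𝓝[>] 0)
      (𝓝 (x ^ (k - 1) * Real.exp (-x / θ) / (Real.Gamma k * θ ^ k))) := by
  have hr : Tendsto (fun δ : ℝ ↦ k * θ / (θ - δ)) (𝓝[>] 0) (𝓝 k) := by
    have : ContinuousAt (fun δ : ℝ ↦ k * θ / (θ - δ)) 0 :=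
      continuousAt_const.div (continuousAt_const.sub continuousAt_id) (by simpa using hθ.ne')
    simpa [hθ.ne'] using this.tendsto.mono_left nhdsWithin_le_nhds
  have hδ : Tendsto (fun δ : ℝ ↦ δ) (𝓝[>] 0) (𝓝[>] 0) := tendsto_id
  have hnδ := tendsto_natFloor_div_mul_nhdsGT_zero hx.le
  have hratio := Real.tendsto_rpow_mul_Gamma_add_div_Gamma_add_one hx hk hδ hnδ hr
  have hpow : Tendsto (fun δ : ℝ ↦ ((θ - δ) / θ) ^ ⌊x / δ⌋₊) (𝓝[>] 0) (𝓝 (exp (-x / θ))) := by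
    have := Real.tendsto_one_add_mul_pow_exp (a := -θ⁻¹)
      (tendsto_nhdsWithin_mono_right (fun _ h ↦ ne_of_gt h) hδ) hnδ
    rw [show x * -θ⁻¹ = -x / θ by ring] at this
    refine this.congr fun δ ↦ ?_
    rw [sub_div, div_self hθ.ne']
    ring
  have hΓ : ContinuousAt Real.Gamma k := (Real.differentiableAt_Gamma fun m ↦
    ((neg_nonpos.2 m.cast_nonneg).trans_lt hk).ne').continuousAt
  have hnorm := (hΓ.tendsto.comp hr).mul (tendsto_const_nhds.rpow hr (Or.inl hθ.ne'))
  refine ((hratio.mul hpow).div hnorm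
    (mul_pos (Real.Gamma_pos_of_pos hk) (Real.rpow_pos_of_pos hθ k)).ne').congr' ?_
  filter_upwards [self_mem_nhdsWithin] with δ hδpos
  exact (one_div_mul_negBinPMF_sub_div hθ hδpos _ _).symm
end

section
/- Fix p > 0 and x > 1. Set r*(δ) = 2δp/(p−δ), q*(δ) = (p−δ)/p, and P_δ(n, m) = (m/n) Γ(n(1+r*)−m)/(Γ(n r*) Γ(n−m+1)) (1−q*)^{r* n} (q*)^{n−m}. Then with n = x/δ and m = 1/δ, lim_{δ→0⁺} (1/δ) P_δ(x/δ, 1/δ) = (x−1)^{2x−1} e^{−(1/p + 2 ln p)x + 1/p} / (x Γ(2x)). -/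
/-! With `A = (x - 1)/δ` and `C = 2xp/(p - δ)`, the relation `Γ(A + 1) = A Γ(A)` rewrites
`(1/δ) P_δ(x/δ, 1/δ)` as `Γ(A + C)/(Γ(A) A^C)` times
`(x - 1)^(C - 1) p^(-C) (1 - δ/p)^A/(x Γ(C))`.
As `δ → 0⁺` we have `A → ∞` and `C → 2x`. Log-convexity of `Γ` squeezes `log Γ(A + C) - log Γ(A)`
between `C log A` and `C log (A + C)`, so the first factor tends to `1`, while
`(1 - δ/p)^A → exp (-(x - 1)/p)` by the compound-interest limit. -/

open Real Filter Topology

/-- The discrete cascade-size probability, extended to real arguments via the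
Gamma function: `P_δ(n, m) = (m/n) Γ(n(1+r*)−m)/(Γ(n r*) Γ(n−m+1)) (1−q*)^{r* n} (q*)^{n−m}`,
with `r* = 2δp/(p−δ)` and `q* = (p−δ)/p`. -/
noncomputable def cascadeP (p δ n m : ℝ) : ℝ :=
  (m / n) * Real.Gamma (n * (1 + 2 * δ * p / (p - δ)) - m)
      / (Real.Gamma (n * (2 * δ * p / (p - δ))) * Real.Gamma (n - m + 1))
    * (1 - (p - δ) / p) ^ (2 * δ * p / (p - δ) * n) * ((p - δ) / p) ^ (n - m)

namespace Real

theorem log_Gamma_add_sub_log_Gamma_le {y s : ℝ} (hy : 0 < y) (hs : 0 < s) :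
    log (Gamma (y + s)) - log (Gamma y) ≤ s * log (y + s) := by
  have hys : 0 < y + s := by linarith
  have h := convexOn_log_Gamma.secant_mono (a := y + s) hys (x := y) (y := y + s + 1) hy
    (by simp only [Set.mem_Ioi]; linarith) (by linarith) (by linarith) (by linarith)
  simp only [Function.comp_apply, Gamma_add_one hys.ne',
    log_mul hys.ne' (Gamma_pos_of_pos hys).ne'] at h
  rw [show y + s + 1 - (y + s) = 1 by ring, show y - (y + s) = -s by ring, div_one,
    add_sub_cancel_right, div_le_iff_of_neg (neg_lt_zero.2 hs)] at h
  linarith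

theorem mul_log_le_log_Gamma_add_sub_log_Gamma {y s : ℝ} (hy : 0 < y) (hs : 1 ≤ s) :
    s * log y ≤ log (Gamma (y + s)) - log (Gamma y) := by
  have h := convexOn_log_Gamma.secant_mono (a := y) hy (x := y + 1) (y := y + s)
    (by simp only [Set.mem_Ioi]; linarith) (by simp only [Set.mem_Ioi]; linarith)
    (by linarith) (by linarith) (by linarith)
  simp only [Function.comp_apply, Gamma_add_one hy.ne', log_mul hy.ne' (Gamma_pos_of_pos hy).ne',
    add_sub_cancel_left, div_one] at h
  rw [le_div_iff₀ (by linarith)] at h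
  linarith

theorem tendsto_Gamma_add_div_Gamma_mul_rpow {α : Type*} {l : Filter α} {y s : α → ℝ} {s₀ : ℝ}
    (hy : Tendsto y l atTop) (hs : Tendsto s l (𝓝 s₀)) (hs_one : ∀ᶠ t in l, 1 ≤ s t) :
    Tendsto (fun t => Gamma (y t + s t) / (Gamma (y t) * y t ^ s t)) l (𝓝 1) := by
  have hgap : Tendsto (fun t => s t * log (1 + s t / y t)) l (𝓝 0) := by
    simpa using
      hs.mul ((tendsto_const_nhds.add (hs.div_atTop hy)).log (by norm_num : (1 : ℝ) + 0 ≠ 0))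
  have hexp : Tendsto (fun t => log (Gamma (y t + s t)) - log (Gamma (y t)) - s t * log (y t))
      l (𝓝 0) := by
    refine tendsto_of_tendsto_of_tendsto_of_le_of_le' tendsto_const_nhds hgap ?_ ?_
    all_goals filter_upwards [hs_one, hy.eventually_gt_atTop 0] with t h1 h0
    · linarith [mul_log_le_log_Gamma_add_sub_log_Gamma h0 h1]
    · have := log_Gamma_add_sub_log_Gamma_le h0 (by linarith : 0 < s t)
      rw [one_add_div h0.ne', log_div (by linarith) h0.ne']
      linarith
  refine (exp_zero ▸ (continuous_exp.tendsto 0).comp hexp).congr' ?_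
  filter_upwards [hs_one, hy.eventually_gt_atTop 0] with t h1 h0
  rw [Function.comp_apply, exp_sub, exp_sub, exp_log (Gamma_pos_of_pos (by linarith)),
    exp_log (Gamma_pos_of_pos h0), mul_comm, ← rpow_def_of_pos h0, div_div]

end Real

theorem tendsto_one_sub_div_rpow_div_nhdsGT_zero (a : ℝ) {c : ℝ} (hc : 0 < c) :
    Tendsto (fun δ => (1 - δ / a) ^ (c / δ)) (𝓝[>] 0) (𝓝 (exp (-c / a))) := by
  refine ((tendsto_one_add_div_rpow_exp (-c / a)).comp
    (tendsto_inv_nhdsGT_zero.const_mul_atTop hc)).congr' ?_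
  filter_upwards [self_mem_nhdsWithin] with δ (hδ : 0 < δ)
  simp only [Function.comp_apply, div_eq_mul_inv c δ]
  congr 1
  field_simp
  ring

theorem one_div_mul_cascadeP_eq {p x δ A C : ℝ} (hδ : 0 < δ) (hδp : δ < p) (hx : 1 < x)
    (hA : A = (x - 1) / δ) (hC : C = 2 * x * p / (p - δ)) :
    1 / δ * cascadeP p δ (x / δ) (1 / δ) =
      Gamma (A + C) / (Gamma A * A ^ C) *
        ((x - 1) ^ (C - 1) * p ^ (-C) * (1 - δ / p) ^ A / (x * Gamma C)) := by
  have hp : 0 < p := hδ.trans hδp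
  have hA0 : 0 < A := hA ▸ div_pos (by linarith) hδ
  have hpδ : p - δ ≠ 0 := by linarith
  have e1 : x / δ * (1 + 2 * δ * p / (p - δ)) - 1 / δ = A + C := by
    rw [hA, hC]; field_simp; ring
  have e2 : x / δ * (2 * δ * p / (p - δ)) = C := by rw [hC]; field_simp
  have e3 : 2 * δ * p / (p - δ) * (x / δ) = C := by rw [hC]; field_simp
  have e4 : x / δ - 1 / δ = A := by rw [hA]; ring
  have e5 : 1 - (p - δ) / p = δ / p := by field_simp; ring
  have e6 : (p - δ) / p = 1 - δ / p := by field_simp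
  have e7 : 1 / δ / (x / δ) = 1 / x := by field_simp
  have hxA : (x - 1) ^ (C - 1) = A ^ (C - 1) * δ ^ (C - 1) := by
    rw [← mul_rpow hA0.le hδ.le, hA, div_mul_cancel₀ _ hδ.ne']
  rw [cascadeP, e1, e2, e3, e4, e5, e6, e7, Gamma_add_one hA0.ne', hxA, rpow_neg hp.le,
    div_rpow hδ.le hp.le, rpow_sub_one hδ.ne', rpow_sub_one hA0.ne']
  field_simp

/-- The continuum limit of the discrete cascade distribution: with `n = x/δ` and
`m = 1/δ`, `lim_{δ→0⁺} (1/δ) P_δ(x/δ, 1/δ) = (x−1)^{2x−1} e^{−(1/p+2 ln p)x+1/p}/(x Γ(2x))`. -/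
theorem cascade_continuum_limit (p x : ℝ) (hp : 0 < p) (hx : 1 < x) :
    Tendsto (fun δ : ℝ => (1 / δ) * cascadeP p δ (x / δ) (1 / δ))
      (𝓝[>] 0)
      (𝓝 ((x - 1) ^ (2 * x - 1) * Real.exp (-(1 / p + 2 * Real.log p) * x + 1 / p)
            / (x * Real.Gamma (2 * x)))) := by
  set A : ℝ → ℝ := fun δ => (x - 1) / δ
  set C : ℝ → ℝ := fun δ => 2 * x * p / (p - δ)
  have hA : Tendsto A (𝓝[>] 0) atTop := by
    simpa [A, div_eq_mul_inv] using tendsto_inv_nhdsGT_zero.const_mul_atTop (sub_pos.2 hx)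
  have hC : Tendsto C (𝓝[>] 0) (𝓝 (2 * x)) := by
    have : ContinuousAt C 0 := continuousAt_const.div (continuousAt_const.sub continuousAt_id)
      (by simpa using hp.ne')
    simpa [C, hp.ne'] using this.tendsto.mono_left nhdsWithin_le_nhds
  have hsmall : ∀ᶠ δ in 𝓝[>] (0 : ℝ), δ ∈ Set.Ioo 0 p := Ioo_mem_nhdsGT hp
  have hC_ge : ∀ᶠ δ in 𝓝[>] (0 : ℝ), 1 ≤ C δ := by
    filter_upwards [hsmall] with δ ⟨hδ, hδp⟩
    rw [le_div_iff₀ (by linarith)]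
    nlinarith
  have hGamma : Tendsto (fun δ => Gamma (C δ)) (𝓝[>] 0) (𝓝 (Gamma (2 * x))) :=
    (differentiableAt_Gamma fun m => by linarith [m.cast_nonneg (α := ℝ)]).continuousAt.tendsto.comp
      hC
  have hfactor := (((tendsto_const_nhds.rpow (hC.sub_const 1) (Or.inl (sub_pos.2 hx).ne')).mul
    (tendsto_const_nhds.rpow hC.neg (Or.inl hp.ne'))).mul
    (tendsto_one_sub_div_rpow_div_nhdsGT_zero p (sub_pos.2 hx))).div
    (hGamma.const_mul x) (by positivity)
  have hvalue : (x - 1) ^ (2 * x - 1) * p ^ (-(2 * x)) * exp (-(x - 1) / p) / (x * Gamma (2 * x))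
      = (x - 1) ^ (2 * x - 1) * exp (-(1 / p + 2 * log p) * x + 1 / p) / (x * Gamma (2 * x)) := by
    rw [rpow_def_of_pos hp, mul_assoc, ← exp_add]
    ring_nf
  rw [← hvalue, ← one_mul (_ / _)]
  refine ((tendsto_Gamma_add_div_Gamma_mul_rpow hA hC hC_ge).mul hfactor).congr' ?_
  filter_upwards [hsmall] with δ ⟨hδ, hδp⟩
  exact (one_div_mul_cascadeP_eq hδ hδp hx rfl rfl).symm
end

section
/- For p > 1/2, the equation x = 2 ln(1 + px) has exactly two nonnegative real solutions: x = 0 and x = x(p) := −2 W_{−1}(−e^{−1/(2p)}/(2p)) − 1/p > 0. For p ≤ 1/2, x = 0 is the only nonnegative solution. -/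
/-!
The roots of `x = 2 log (1 + p x)` are the zeros of `g x = 2 log (1 + p x) - x`, which is
strictly concave on `[0, ∞)`, so it vanishes at most twice there. It vanishes at `0`; for
`p ≤ 1/2` the bound `log (1 + p x) < p x ≤ x / 2` excludes every other root, while for
`p > 1/2` the substitution `1 + p x = -2 p w` turns the equation into
`w e^w = -e^{-1/(2p)} / (2p)`, so `-2 w - 1/p` is the second root.
-/

open Real Set

section StrictConcave

variable {𝕜 β : Type*} [Field 𝕜] [LinearOrder 𝕜] [IsStrictOrderedRing 𝕜]
  [AddCommMonoid β] [LinearOrder β] [IsOrderedAddMonoid β] [Module 𝕜 β] [PosSMulStrictMono 𝕜 β]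
  {s : Set 𝕜} {f : 𝕜 → β}

theorem StrictConcaveOn.min_lt_of_lt_of_lt (hf : StrictConcaveOn 𝕜 s f) {x y z : 𝕜}
    (hx : x ∈ s) (hz : z ∈ s) (hxy : x < y) (hyz : y < z) : min (f x) (f z) < f y :=
  hf.lt_on_openSegment hx hz (hxy.trans hyz).ne
    (by rw [openSegment_eq_Ioo (hxy.trans hyz)]; exact ⟨hxy, hyz⟩)

theorem StrictConcaveOn.eq_or_eq_of_apply_eq (hf : StrictConcaveOn 𝕜 s f) {a b c : 𝕜}
    (ha : a ∈ s) (hb : b ∈ s) (hc : c ∈ s) (hab : a ≠ b) (hfab : f a = f b)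
    (hfc : f c = f a) : c = a ∨ c = b := by
  wlog hlt : a < b generalizing a b
  · exact (this hb ha hab.symm hfab.symm (hfc.trans hfab) (hab.lt_or_gt.resolve_left hlt)).symm
  by_contra! hne
  have key : ∀ {x y z : 𝕜}, x ∈ s → z ∈ s → x < y → y < z → f x = f y → f z = f y → False :=
    fun hx hz hxy hyz hfx hfz => by
      simpa [hfx, hfz] using hf.min_lt_of_lt_of_lt hx hz hxy hyz
  rcases hne.1.lt_or_gt with hca | hac
  · exact key hc hb hca hlt hfc hfab.symm
  rcases hne.2.lt_or_gt with hcb | hbc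
  · exact key ha hb hac hcb hfc.symm (hfab.symm.trans hfc.symm)
  · exact key ha hc hlt hbc hfab (hfc.trans hfab)

end StrictConcave

theorem strictConcaveOn_two_mul_log_one_add_mul_sub {p : ℝ} (hp : 0 < p) :
    StrictConcaveOn ℝ (Ici 0) fun x => 2 * log (1 + p * x) - x := by
  refine ⟨convex_Ici 0, fun x hx y hy hxy a b ha hb hab => ?_⟩
  have hpx : 0 < 1 + p * x := by have := mul_nonneg hp.le hx; linarith
  have hpy : 0 < 1 + p * y := by have := mul_nonneg hp.le hy; linarith
  have hne : 1 + p * x ≠ 1 + p * y := by simpa [hp.ne'] using hxy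
  have hlog := strictConcaveOn_log_Ioi.2 hpx hpy hne ha hb hab
  have hmix : a • (1 + p * x) + b • (1 + p * y) = 1 + p * (a • x + b • y) := by
    simp only [smul_eq_mul]; linear_combination hab
  rw [hmix] at hlog
  simp only [smul_eq_mul] at hlog ⊢
  linear_combination 2 * hlog

theorem two_mul_log_one_add_mul_lt {p x : ℝ} (hp : 0 < p) (hp2 : p ≤ 1 / 2) (hx : 0 < x) :
    2 * log (1 + p * x) < x := by
  have hpx : 0 < p * x := mul_pos hp hx
  have := log_lt_sub_one_of_pos (by linarith : 0 < 1 + p * x) (by linarith)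
  nlinarith

theorem eq_two_mul_log_one_add_mul_of_mul_exp_eq {p w : ℝ} (hp : p ≠ 0)
    (hw : w * exp w = -(exp (-(1 / (2 * p))) / (2 * p))) :
    -2 * w - 1 / p = 2 * log (1 + p * (-2 * w - 1 / p)) := by
  have hlin : 1 + p * (-2 * w - 1 / p) = exp (-(1 / (2 * p)) - w) := by
    rw [exp_sub, eq_div_iff (exp_ne_zero w)]
    field_simp at hw ⊢
    linear_combination -hw
  rw [hlin, log_exp]
  field_simp
  ring

/-- For `p > 1/2` the equation `x = 2 ln(1+px)` has exactly two nonnegative solutions,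
`0` and `x(p) = −2W₋₁(−e^{−1/(2p)}/(2p)) − 1/p > 0` (with `W₋₁` characterized by
`w ≤ −1`, `w e^w = −e^{−1/(2p)}/(2p)`); for `0 < p ≤ 1/2`, `0` is the only one. -/
theorem martingale_root_equation :
    (∀ p : ℝ, 1/2 < p → ∀ w : ℝ, w ≤ -1 →
        w * Real.exp w = -(Real.exp (-(1 / (2 * p))) / (2 * p)) →
        0 < -2 * w - 1 / p ∧
        {x : ℝ | 0 ≤ x ∧ x = 2 * Real.log (1 + p * x)} = {0, -2 * w - 1 / p}) ∧
    (∀ p : ℝ, 0 < p → p ≤ 1/2 →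
        {x : ℝ | 0 ≤ x ∧ x = 2 * Real.log (1 + p * x)} = {0}) := by
  refine ⟨fun p hp w hw hwe => ?_, fun p hp hp2 => ?_⟩
  · have hp0 : 0 < p := by linarith
    have hroot := eq_two_mul_log_one_add_mul_of_mul_exp_eq hp0.ne' hwe
    have hpos : 0 < -2 * w - 1 / p := by
      have : 1 / p < 2 := by rw [div_lt_iff₀ hp0]; linarith
      linarith
    have hzero : ∀ x : ℝ, x = 2 * log (1 + p * x) → 2 * log (1 + p * x) - x = 0 :=
      fun x hx => sub_eq_zero.2 hx.symm
    refine ⟨hpos, Set.ext fun x => ⟨fun ⟨hx0, hx⟩ => ?_, ?_⟩⟩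
    · exact (strictConcaveOn_two_mul_log_one_add_mul_sub hp0).eq_or_eq_of_apply_eq
        self_mem_Ici hpos.le hx0 hpos.ne ((hzero 0 (by simp)).trans (hzero _ hroot).symm)
        ((hzero x hx).trans (hzero 0 (by simp)).symm)
    · rintro (rfl | rfl)
      · simp
      · exact ⟨hpos.le, hroot⟩
  · ext x
    refine ⟨fun ⟨hx0, hx⟩ => ?_, ?_⟩
    · by_contra hne
      exact (two_mul_log_one_add_mul_lt hp hp2 (lt_of_le_of_ne hx0 (Ne.symm hne))).ne hx.symm
    · rintro rfl
      simp
end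

section
/- Fix p > 1/2. For each sufficiently small δ > 0, write the nontrivial solution α₂(δ) ∈ (0,1) of (δ/p)^{2pδ/(p−δ)} (α(δ/p − 1) + 1)^{−2pδ/(p−δ)} = α as α₂(δ) = 1 − δ x_δ. Then x_δ converges as δ → 0⁺ to the unique positive solution x(p) of x = 2 ln(1 + px). -/
/-!
Substituting `α = 1 - δ t`, the martingale equation becomes `F_δ(t) = 0` for
`F_δ(t) = δ⁻¹ log (1 - δ t) + 2p/(p - δ) · log (1 + (p - δ) t)`, a strictly concave function
vanishing at `0`. So `x_δ` is its positive zero, and the sign of `F_δ(t)` tells on which side of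
`x_δ` a point `t > 0` lies. As `δ → 0⁺`, `F_δ(t) → 2 log (1 + p t) - t`, which is again strictly
concave and vanishes at `0` and `x(p)`, hence is positive on `(0, x(p))` and negative beyond.
For `0 < a < x(p) < b` we therefore get `F_δ(a) > 0 > F_δ(b)` for small `δ`, i.e. `a < x_δ < b`.
-/

open Real Filter Topology Set

namespace StrictConcaveOn

variable {s : Set ℝ} {f : ℝ → ℝ} {x y t : ℝ}

theorem pos_of_mem_Ioo (hf : StrictConcaveOn ℝ s f) (hx : x ∈ s) (hy : y ∈ s) (hfx : f x = 0)
    (hfy : f y = 0) (ht : t ∈ Ioo x y) : 0 < f t := by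
  have hxy := ht.1.trans ht.2
  simpa [hfx, hfy] using
    hf.lt_on_openSegment hx hy hxy.ne (by rwa [openSegment_eq_Ioo hxy])

theorem neg_of_lt_of_lt (hf : StrictConcaveOn ℝ s f) (hx : x ∈ s) (ht : t ∈ s) (hfx : f x = 0)
    (hfy : f y = 0) (hxy : x < y) (hyt : y < t) : f t < 0 := by
  have := hf.lt_on_openSegment hx ht (hxy.trans hyt).ne
    (by rw [openSegment_eq_Ioo (hxy.trans hyt)]; exact ⟨hxy, hyt⟩)
  rw [hfx, hfy, min_lt_iff] at this
  exact this.resolve_left (lt_irrefl 0)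

theorem lt_of_pos (hf : StrictConcaveOn ℝ s f) (hx : x ∈ s) (ht : t ∈ s) (hfx : f x = 0)
    (hfy : f y = 0) (hxy : x < y) (hxt : x < t) (h : 0 < f t) : t < y := by
  by_contra! hyt
  obtain rfl | hyt := hyt.eq_or_lt
  · exact h.ne' hfy
  · exact (hf.neg_of_lt_of_lt hx ht hfx hfy hxy hyt).not_gt h

theorem gt_of_neg (hf : StrictConcaveOn ℝ s f) (hx : x ∈ s) (hy : y ∈ s) (hfx : f x = 0)
    (hfy : f y = 0) (hxt : x < t) (h : f t < 0) : y < t := by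
  by_contra! hty
  obtain rfl | hty := hty.eq_or_lt
  · exact h.ne hfy
  · exact (hf.pos_of_mem_Ioo hx hy hfx hfy ⟨hxt, hty⟩).not_gt h

end StrictConcaveOn

theorem tendsto_pos_root_of_strictConcaveOn {ι : Type*} {l : Filter ι} {F : ι → ℝ → ℝ}
    {g : ℝ → ℝ} {u r : ι → ℝ} {x : ℝ} (hg : StrictConcaveOn ℝ (Ici 0) g) (hg0 : g 0 = 0)
    (hx : 0 < x) (hgx : g x = 0) (hF : ∀ t, 0 < t → Tendsto (fun i ↦ F i t) l (𝓝 (g t)))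
    (hu : Tendsto u l atTop) (hFc : ∀ᶠ i in l, StrictConcaveOn ℝ (Ico 0 (u i)) (F i))
    (hr : ∀ᶠ i in l, F i 0 = 0 ∧ r i ∈ Ioo 0 (u i) ∧ F i (r i) = 0) :
    Tendsto r l (𝓝 x) := by
  have h0 : (0 : ℝ) ∈ Ici 0 := self_mem_Ici
  refine tendsto_order.2 ⟨fun a hax ↦ ?_, fun b hxb ↦ ?_⟩
  · rcases le_or_gt a 0 with ha | ha
    · filter_upwards [hr] with i hi using ha.trans_lt hi.2.1.1
    have hga := hg.pos_of_mem_Ioo h0 hx.le hg0 hgx ⟨ha, hax⟩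
    filter_upwards [hFc, hr, (hF a ha).eventually (lt_mem_nhds hga), hu.eventually_gt_atTop a]
      with i hc ⟨hF0, hri, hFr⟩ hFa hau
    exact hc.lt_of_pos (left_mem_Ico.2 (ha.trans hau)) ⟨ha.le, hau⟩ hF0 hFr hri.1 ha hFa
  · have hb := hx.trans hxb
    have hgb := hg.neg_of_lt_of_lt h0 (mem_Ici.2 hb.le) hg0 hgx hx hxb
    filter_upwards [hFc, hr, (hF b hb).eventually (gt_mem_nhds hgb), hu.eventually_gt_atTop b]
      with i hc ⟨hF0, hri, hFr⟩ hFb hbu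
    exact hc.gt_of_neg (left_mem_Ico.2 (hb.trans hbu)) (Ioo_subset_Ico_self hri) hF0 hFr hb hFb

theorem strictConcaveOn_mul_log_add_mul {a b c : ℝ} (hb : 0 < b) (hc : c ≠ 0) :
    StrictConcaveOn ℝ {t | 0 < a + c * t} fun t ↦ b * log (a + c * t) := by
  refine ⟨convex_iff_forall_pos.2 fun x hx y hy u v hu hv huv ↦ ?_,
    fun x hx y hy hxy u v hu hv huv ↦ ?_⟩
  · simp only [mem_ofPred_eq, smul_eq_mul] at *
    rw [show a + c * (u * x + v * y) = u * (a + c * x) + v * (a + c * y) by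
      linear_combination (-a) * huv]
    positivity
  · have hlog := strictConcaveOn_log_Ioi.2 hx hy (fun h ↦ hxy (mul_left_cancel₀ hc (by linarith)))
      hu hv huv
    have hcomb : u • (a + c * x) + v • (a + c * y) = a + c * (u • x + v • y) := by
      simp only [smul_eq_mul]; linear_combination a * huv
    rw [hcomb] at hlog
    simp only [smul_eq_mul] at *
    nlinarith

noncomputable def martingaleDefect (p δ t : ℝ) : ℝ :=
  δ⁻¹ * log (1 - δ * t) + 2 * p / (p - δ) * log (1 + (p - δ) * t)

section

variable {p δ : ℝ}

theorem strictConcaveOn_martingaleDefect (hδ : 0 < δ) (hδp : δ < p) :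
    StrictConcaveOn ℝ (Ico 0 δ⁻¹) (martingaleDefect p δ) := by
  have hpδ : 0 < p - δ := sub_pos.2 hδp
  have hp : 0 < p := hδ.trans hδp
  have h₁ := strictConcaveOn_mul_log_add_mul (a := 1) (inv_pos.2 hδ) (neg_ne_zero.2 hδ.ne')
  have h₂ := strictConcaveOn_mul_log_add_mul (a := 1) (b := 2 * p / (p - δ))
    (by positivity) hpδ.ne'
  refine ((h₁.subset (fun t ht ↦ ?_) (convex_Ico _ _)).add
    (h₂.subset (fun t ht ↦ ?_) (convex_Ico _ _))).congr fun t _ ↦ ?_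
  · have := mul_lt_mul_of_pos_left ht.2 hδ
    rw [mul_inv_cancel₀ hδ.ne'] at this
    simp only [mem_ofPred_eq]
    linarith
  · have := ht.1
    simp only [mem_ofPred_eq]
    positivity
  · simp only [martingaleDefect, Pi.add_apply, neg_mul, ← sub_eq_add_neg]

theorem tendsto_martingaleDefect {t : ℝ} (hp : 0 < p) (ht : 0 < 1 + p * t) :
    Tendsto (fun δ ↦ martingaleDefect p δ t) (𝓝[>] 0) (𝓝 (2 * log (1 + p * t) - t)) := by
  have hlog : HasDerivAt (fun δ ↦ log (1 - δ * t)) (-t) 0 := by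
    simpa using (((hasDerivAt_id (0 : ℝ)).mul_const t).const_sub 1).log (by simp)
  have hcoef : ContinuousAt (fun δ ↦ 2 * p / (p - δ) * log (1 + (p - δ) * t)) 0 := by
    fun_prop (disch := simp [hp.ne', ht.ne'])
  have := hlog.tendsto_slope_zero_right.add (hcoef.tendsto.mono_left nhdsWithin_le_nhds)
  simp only [zero_add, zero_mul, sub_zero, log_one, smul_eq_mul] at this
  rwa [show -t + 2 * p / p * log (1 + p * t) = 2 * log (1 + p * t) - t by field_simp; ring] at this

theorem martingaleDefect_root {α : ℝ} (hδ : 0 < δ) (hδp : δ < p) (hα : α ∈ Ioo 0 1)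
    (h : (δ / p) ^ (2 * p * δ / (p - δ)) * (α * (δ / p - 1) + 1) ^ (-(2 * p * δ / (p - δ))) = α) :
    (1 - α) / δ ∈ Ioo 0 δ⁻¹ ∧ martingaleDefect p δ ((1 - α) / δ) = 0 := by
  obtain ⟨hα0, hα1⟩ := hα
  have hp : 0 < p := hδ.trans hδp
  have hpδ : 0 < p - δ := sub_pos.2 hδp
  have hx : 0 < (1 - α) / δ := div_pos (by linarith) hδ
  set x := (1 - α) / δ
  have hαx : 1 - δ * x = α := by simp only [x]; field_simp; ring
  have hB : 0 < 1 + (p - δ) * x := by positivity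
  have hA : α * (δ / p - 1) + 1 = δ / p * (1 + (p - δ) * x) := by rw [← hαx]; field_simp; ring
  refine ⟨⟨hx, ?_⟩, ?_⟩
  · rw [inv_eq_one_div]
    exact div_lt_div_of_pos_right (by linarith) hδ
  · have hlog := congrArg log h
    rw [hA, log_mul (by positivity) (by positivity), log_rpow (by positivity),
      log_rpow (by positivity), log_mul (by positivity) hB.ne'] at hlog
    rw [martingaleDefect, hαx, ← hlog]
    field_simp
    ring

end

theorem martingale_root_limit_general (p : ℝ) (hp : 1/2 < p) (α₂ : ℝ → ℝ)
    (hα : ∀ᶠ δ in 𝓝[>] (0:ℝ), α₂ δ ∈ Set.Ioo (0:ℝ) 1 ∧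
      (δ / p) ^ (2 * p * δ / (p - δ)) * (α₂ δ * (δ / p - 1) + 1) ^ (-(2 * p * δ / (p - δ)))
        = α₂ δ)
    (xp : ℝ) (hxp : 0 < xp) (hxeq : xp = 2 * Real.log (1 + p * xp)) :
    Tendsto (fun δ : ℝ => (1 - α₂ δ) / δ) (𝓝[>] 0) (𝓝 xp) := by
  have hp0 : 0 < p := by linarith
  have hconc := strictConcaveOn_mul_log_add_mul (a := 1) two_pos hp0.ne'
  have hg : StrictConcaveOn ℝ (Ici 0) fun t ↦ 2 * log (1 + p * t) - t :=
    (hconc.sub_convexOn (convexOn_id hconc.1)).subset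
      (fun t (ht : 0 ≤ t) ↦ by simp only [mem_ofPred_eq]; positivity) (convex_Ici 0)
  refine tendsto_pos_root_of_strictConcaveOn hg (by simp) hxp (by linarith)
    (fun t ht ↦ tendsto_martingaleDefect hp0 (by positivity)) tendsto_inv_nhdsGT_zero ?_ ?_
  · filter_upwards [Ioo_mem_nhdsGT hp0] with δ hδ using strictConcaveOn_martingaleDefect hδ.1 hδ.2
  · filter_upwards [hα, Ioo_mem_nhdsGT hp0] with δ hαδ hδ
    exact ⟨by simp [martingaleDefect], martingaleDefect_root hδ.1 hδ.2 hαδ.1 hαδ.2⟩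

/-- Fix `p > 1/2`. If for all sufficiently small `δ > 0`, `α₂(δ) ∈ (0,1)` is a nontrivial
solution of the martingale equation
`(δ/p)^{2pδ/(p−δ)} (α(δ/p − 1) + 1)^{−2pδ/(p−δ)} = α`, then writing `α₂(δ) = 1 − δ x_δ`,
the quantity `x_δ = (1 − α₂(δ))/δ` converges as `δ → 0⁺` to the unique positive solution
`x(p)` of `x = 2 ln(1 + px)`. -/
theorem martingale_root_limit (p : ℝ) (hp : 1/2 < p) (α₂ : ℝ → ℝ)
    (hα : ∀ᶠ δ in 𝓝[>] (0:ℝ), α₂ δ ∈ Set.Ioo (0:ℝ) 1 ∧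
      (δ / p) ^ (2 * p * δ / (p - δ)) * (α₂ δ * (δ / p - 1) + 1) ^ (-(2 * p * δ / (p - δ)))
        = α₂ δ)
    (xp : ℝ) (hxp : 0 < xp) (hxeq : xp = 2 * Real.log (1 + p * xp))
    (huniq : ∀ y : ℝ, 0 < y → y = 2 * Real.log (1 + p * y) → y = xp) :
    Tendsto (fun δ : ℝ => (1 - α₂ δ) / δ) (𝓝[>] 0) (𝓝 xp) :=
  martingale_root_limit_general p hp α₂ hα xp hxp hxeq
end

section
/- The function χ(p) = 2 W_{−1}(−e^{−1/(2p)}/(2p)) + 1/p satisfies χ(p) < 0 for all p > 1/2 and χ(p) → 0 as p → 1/2⁺; consequently the survival probability P(Z = ∞) = 1 − e^{χ(p)} is strictly positive for p > 1/2 and tends to 0 at criticality. -/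
open Real Filter Topology Set

lemma fW_strictAntiOn : StrictAntiOn (fun x : ℝ => x * Real.exp x) (Set.Iic (-1)) := by
  apply strictAntiOn_of_deriv_neg (convex_Iic _)
  · exact (continuous_id.mul Real.continuous_exp).continuousOn
  · intro x hx
    rw [interior_Iic] at hx
    have hd : HasDerivAt (fun x : ℝ => x * Real.exp x) (1 * Real.exp x + x * Real.exp x) x :=
      (hasDerivAt_id x).mul (Real.hasDerivAt_exp x)
    rw [hd.deriv]
    have hx1 : x < -1 := hx
    nlinarith [Real.exp_pos x]

/-- If `W p` denotes `W₋₁(−e^{−1/(2p)}/(2p))` for `p > 1/2` (characterized by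
`W p ≤ −1` and `W p · e^{W p} = −e^{−1/(2p)}/(2p)`), then `χ(p) = 2 W p + 1/p`
satisfies `χ(p) < 0` for all `p > 1/2` and `χ(p) → 0` as `p → 1/2⁺`; consequently the
survival probability `1 − e^{χ(p)}` is strictly positive for `p > 1/2`. -/
theorem survival_probability_positive (W : ℝ → ℝ)
    (hW1 : ∀ p : ℝ, 1/2 < p → W p ≤ -1)
    (hW : ∀ p : ℝ, 1/2 < p →
      W p * Real.exp (W p) = -(Real.exp (-(1 / (2 * p))) / (2 * p))) :
    (∀ p : ℝ, 1/2 < p → 2 * W p + 1 / p < 0) ∧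
      Tendsto (fun p : ℝ => 2 * W p + 1 / p) (𝓝[>] (1/2)) (𝓝 0) ∧
      (∀ p : ℝ, 1/2 < p → 0 < 1 - Real.exp (2 * W p + 1 / p)) := by
  have hneg : ∀ p : ℝ, 1/2 < p → 2 * W p + 1 / p < 0 := by
    intro p hp
    have h1 : W p ≤ -1 := hW1 p hp
    have h2 : 1 / p < 2 := by
      rw [div_lt_iff₀ (by linarith)]; linarith
    linarith
  -- limit of the RHS of the functional equation
  have h2p : Tendsto (fun p : ℝ => 2 * p) (𝓝[>] (1/2 : ℝ)) (𝓝 1) := by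
    have h : Tendsto (fun p : ℝ => 2 * p) (𝓝 (1/2 : ℝ)) (𝓝 (2 * (1/2))) :=
      (continuous_const.mul continuous_id).tendsto _
    simpa using h.mono_left nhdsWithin_le_nhds
  have hg : Tendsto (fun p : ℝ => -(Real.exp (-(1 / (2 * p))) / (2 * p)))
      (𝓝[>] (1/2 : ℝ)) (𝓝 (-Real.exp (-1))) := by
    have hinv : Tendsto (fun p : ℝ => 1 / (2 * p)) (𝓝[>] (1/2 : ℝ)) (𝓝 1) := by
      simpa [one_div] using h2p.inv₀ one_ne_zero
    have hexp : Tendsto (fun p : ℝ => Real.exp (-(1 / (2 * p)))) (𝓝[>] (1/2 : ℝ))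
        (𝓝 (Real.exp (-1))) := (Real.continuous_exp.tendsto _).comp hinv.neg
    have := (hexp.div h2p one_ne_zero).neg
    simpa using this
  have hWt : Tendsto W (𝓝[>] (1/2 : ℝ)) (𝓝 (-1)) := by
    rw [tendsto_order]
    constructor
    · intro a ha
      have hfa : -Real.exp (-1) < a * Real.exp a := by
        have := fW_strictAntiOn (mem_Iic.mpr ha.le) (mem_Iic.mpr le_rfl) ha
        simpa using this
      filter_upwards [hg.eventually_lt_const hfa, self_mem_nhdsWithin] with p hlt hp
      by_contra h
      push_neg at h
      have hge : a * Real.exp a ≤ W p * Real.exp (W p) := by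
        rcases eq_or_lt_of_le h with h' | h'
        · rw [h']
        · exact (fW_strictAntiOn (mem_Iic.mpr (h.trans ha.le)) (mem_Iic.mpr ha.le) h').le
      rw [hW p hp] at hge
      linarith
    · intro b hb
      filter_upwards [self_mem_nhdsWithin] with p hp
      exact lt_of_le_of_lt (hW1 p hp) hb
  have hinvp : Tendsto (fun p : ℝ => 1 / p) (𝓝[>] (1/2 : ℝ)) (𝓝 2) := by
    have h : Tendsto (fun p : ℝ => 1 / p) (𝓝 (1/2 : ℝ)) (𝓝 (1 / (1/2))) :=
      (continuousAt_const.div continuousAt_id (by norm_num)).tendsto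
    have he : (1:ℝ) / (1/2) = 2 := by norm_num
    rw [he] at h
    exact h.mono_left nhdsWithin_le_nhds
  have hchi : Tendsto (fun p : ℝ => 2 * W p + 1 / p) (𝓝[>] (1/2 : ℝ)) (𝓝 0) := by
    have := (hWt.const_mul 2).add hinvp
    simpa using this
  refine ⟨hneg, hchi, fun p hp => ?_⟩
  have h := hneg p hp
  have : Real.exp (2 * W p + 1 / p) < Real.exp 0 := Real.exp_lt_exp.mpr h
  rw [Real.exp_zero] at this
  linarith
end

section
/- The total progeny of a Galton–Watson branching process with offspring distribution A started from m ≥ 1 individuals has the same distribution as the first hitting time of 0 by the random walk S_n = m + Σ_{i=1}^n (V_i − 1), where V_i are i.i.d. with distribution A supported on ℕ; in particular the total progeny is finite if and only if the walk reaches 0. -/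
/-!
Read the offspring numbers of a population breadth first, generation after generation, as a
word `w`. The Łukasiewicz walk `m + ∑_{i<j} (w i - 1)` equals the size of generation `n` at
the position where that generation starts, and stays positive inside a generation, so it
first hits `0` exactly when the population dies out, after all individuals have been read.
Hence, for finite `k`, both `{Y = k}` and `{T = k}` are disjoint unions over the words whose
walk first hits `0` at time `k` of events fixing `k` independent `A`-distributed variables to
the letters of the word, and corresponding events have the same probability `∏ A (w j)`.
The value `⊤` is handled by taking complements.
-/

open MeasureTheory ProbabilityTheory Finset Function
open scoped ENNReal

lemma ENat.summable {α : Type*} (f : α → ℕ∞) : Summable f :=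
  ⟨_, tendsto_atTop_iSup fun _ _ => sum_le_sum_of_subset⟩

lemma ENat.exists_eq_zero_of_tsum_ne_top {f : ℕ → ℕ} (h : ∑' n, (f n : ℕ∞) ≠ ⊤) :
    ∃ n, f n = 0 := by
  by_contra! hpos
  refine h (ENat.eq_top_iff_forall_ge.2 fun K => ?_)
  calc (K : ℕ∞) = ∑ _n ∈ range K, (1 : ℕ∞) := by simp
    _ ≤ ∑ n ∈ range K, (f n : ℕ∞) :=
      sum_le_sum fun n _ => by exact_mod_cast Nat.one_le_iff_ne_zero.2 (hpos n)
    _ ≤ ∑' n, (f n : ℕ∞) := (ENat.summable _).sum_le_tsum _ fun _ _ => zero_le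

lemma ENat.sInf_image_natCast_eq_natCast_iff {s : Set ℕ} {k : ℕ} :
    sInf (((↑) : ℕ → ℕ∞) '' s) = k ↔ IsLeast s k := by
  have hleast : ∀ {k : ℕ}, IsLeast s k → sInf (((↑) : ℕ → ℕ∞) '' s) = k := fun hk =>
    (Nat.mono_cast.map_isLeast hk).csInf_eq
  refine ⟨fun h => ?_, hleast⟩
  obtain rfl | hs := s.eq_empty_or_nonempty
  · simp at h
  · have hmin : IsLeast s (sInf s) := ⟨Nat.sInf_mem hs, fun _ => Nat.sInf_le⟩
    rwa [← Nat.cast_inj.1 ((hleast hmin).symm.trans h)]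

lemma ENat.sInf_image_natCast_ne_top_iff {s : Set ℕ} :
    sInf (((↑) : ℕ → ℕ∞) '' s) ≠ ⊤ ↔ s.Nonempty := by
  simp [sInf_eq_top, Set.nonempty_iff_ne_empty, Set.eq_empty_iff_forall_notMem]

section Probability

variable {Ω ι : Type*} {mΩ : MeasurableSpace Ω} {μ : Measure Ω}

lemma setOf_ne_top_eq_iUnion (Y : Ω → ℕ∞) : {ω | Y ω ≠ ⊤} = ⋃ k : ℕ, {ω | Y ω = k} := by
  ext ω
  simp [ENat.ne_top_iff_exists, eq_comm]

lemma measure_ne_top_eq_tsum {Y : Ω → ℕ∞} (hY : ∀ k : ℕ, MeasurableSet {ω | Y ω = k}) :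
    μ {ω | Y ω ≠ ⊤} = ∑' k : ℕ, μ {ω | Y ω = k} := by
  rw [setOf_ne_top_eq_iUnion, measure_iUnion (fun k k' hne => Set.disjoint_left.2
    fun ω hk hk' => hne (Nat.cast_inj.1 (hk.symm.trans hk'))) hY]

lemma measure_eq_top_eq_sub_tsum [IsFiniteMeasure μ] {Y : Ω → ℕ∞}
    (hY : ∀ k : ℕ, MeasurableSet {ω | Y ω = k}) :
    μ {ω | Y ω = ⊤} = μ Set.univ - ∑' k : ℕ, μ {ω | Y ω = k} := by
  have hmeas : MeasurableSet {ω | Y ω ≠ ⊤} := setOf_ne_top_eq_iUnion Y ▸ .iUnion hY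
  rw [← measure_ne_top_eq_tsum hY, ← measure_compl hmeas (measure_ne_top μ _), Set.compl_ofPred]
  simp

lemma measure_eq_top_eq_of_forall_natCast [IsFiniteMeasure μ] {Y T : Ω → ℕ∞}
    (hY : ∀ k : ℕ, MeasurableSet {ω | Y ω = k}) (hT : ∀ k : ℕ, MeasurableSet {ω | T ω = k})
    (h : ∀ k : ℕ, μ {ω | Y ω = k} = μ {ω | T ω = k}) : μ {ω | Y ω = ⊤} = μ {ω | T ω = ⊤} := by
  rw [measure_eq_top_eq_sub_tsum hY, measure_eq_top_eq_sub_tsum hT, tsum_congr h]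

lemma measure_forall_mem_eq_prod {Z : ι → Ω → ℕ} (hZ : iIndepFun Z μ) {A : ℕ → ℝ≥0∞}
    (hA : ∀ i n, μ {ω | Z i ω = n} = A n) (s : Finset ι) (f : ι → ℕ) :
    μ {ω | ∀ i ∈ s, Z i ω = f i} = ∏ i ∈ s, A (f i) := by
  have hinter : {ω | ∀ i ∈ s, Z i ω = f i} = ⋂ i ∈ s, Z i ⁻¹' {f i} := by ext; simp
  rw [hinter, hZ.meas_biInter fun i _ => ⟨{f i}, measurableSet_singleton _, rfl⟩]
  exact prod_congr rfl fun i _ => hA i (f i)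

lemma measurableSet_forall_mem_eq {Z : ι → Ω → ℕ} (hZ : ∀ i, Measurable (Z i))
    (s : Finset ι) (f : ι → ℕ) : MeasurableSet {ω | ∀ i ∈ s, Z i ω = f i} := by
  have hinter : {ω | ∀ i ∈ s, Z i ω = f i} = ⋂ i ∈ s, Z i ⁻¹' {f i} := by ext; simp
  rw [hinter]
  exact Finset.measurableSet_biInter s fun i _ => hZ i (measurableSet_singleton _)

end Probability

namespace GaltonWatson

/-- Breadth-first reading of a word: when `w 0, w 1, …` are the offspring counts of the
individuals of a population started from `m` ancestors, listed generation by generation,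
`explore m w n` is the pair (size of generation `n`, position in `w` where it starts). -/
def explore (m : ℕ) (w : ℕ → ℕ) : ℕ → ℕ × ℕ
  | 0 => (m, 0)
  | n + 1 =>
    (∑ i ∈ range (explore m w n).1, w ((explore m w n).2 + i),
      (explore m w n).2 + (explore m w n).1)

def genSize (m : ℕ) (w : ℕ → ℕ) (n : ℕ) : ℕ := (explore m w n).1

def genStart (m : ℕ) (w : ℕ → ℕ) (n : ℕ) : ℕ := (explore m w n).2

def walk (m : ℕ) (w : ℕ → ℕ) (j : ℕ) : ℤ := m + ∑ i ∈ range j, ((w i : ℤ) - 1)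

section Exploration

variable {m : ℕ} {w : ℕ → ℕ}

@[simp] lemma genSize_zero : genSize m w 0 = m := rfl

@[simp] lemma genStart_zero : genStart m w 0 = 0 := rfl

lemma genSize_succ (n : ℕ) :
    genSize m w (n + 1) = ∑ i ∈ range (genSize m w n), w (genStart m w n + i) := rfl

lemma genStart_succ (n : ℕ) : genStart m w (n + 1) = genStart m w n + genSize m w n := rfl

lemma genStart_eq_sum (n : ℕ) : genStart m w n = ∑ l ∈ range n, genSize m w l := by
  induction n with
  | zero => rfl
  | succ n ih => rw [genStart_succ, sum_range_succ, ih]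

lemma genSize_eq_zero_of_le {N n : ℕ} (hN : genSize m w N = 0) (hn : N ≤ n) :
    genSize m w n = 0 ∧ genStart m w n = genStart m w N := by
  induction n, hn using Nat.le_induction with
  | base => exact ⟨hN, rfl⟩
  | succ n _ ih => simp [genSize_succ, genStart_succ, ih.1, ih.2]

lemma exists_genStart_le_lt_succ {N j : ℕ} (hj : j < genStart m w N) :
    ∃ n < N, genStart m w n ≤ j ∧ j < genStart m w (n + 1) := by
  induction N with
  | zero => simp at hj
  | succ N ih =>
    by_cases hjN : j < genStart m w N
    · obtain ⟨n, hn, h⟩ := ih hjN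
      exact ⟨n, by omega, h⟩
    · exact ⟨N, by omega, by omega, hj⟩

lemma walk_congr {w' : ℕ → ℕ} {j : ℕ} (h : ∀ i < j, w i = w' i) : walk m w j = walk m w' j := by
  unfold walk
  congr 1
  exact sum_congr rfl fun i hi => by rw [h i (mem_range.1 hi)]

lemma walk_add (a b : ℕ) :
    walk m w (a + b) = walk m w a + ∑ i ∈ range b, ((w (a + i) : ℤ) - 1) := by
  rw [walk, walk, sum_range_add, add_assoc]

lemma walk_genStart (n : ℕ) : walk m w (genStart m w n) = genSize m w n := by
  induction n with
  | zero => simp [walk]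
  | succ n ih =>
    rw [genStart_succ, walk_add, ih, genSize_succ, sum_sub_distrib]
    push_cast
    simp

/-- Within a generation, the walk is at least the number of its individuals still to be
read, hence positive. -/
lemma walk_pos_of_genStart_le {n j : ℕ} (h₁ : genStart m w n ≤ j)
    (h₂ : j < genStart m w (n + 1)) : 0 < walk m w j := by
  obtain ⟨r, rfl⟩ := Nat.exists_eq_add_of_le h₁
  have hr : r < genSize m w n := by rw [genStart_succ] at h₂; omega
  have hsteps : -(r : ℤ) ≤ ∑ i ∈ range r, ((w (genStart m w n + i) : ℤ) - 1) := by
    calc -(r : ℤ) = ∑ _i ∈ range r, (-1 : ℤ) := by simp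
      _ ≤ _ := sum_le_sum fun i _ => by omega
  rw [walk_add, walk_genStart]
  omega

lemma walk_pos_of_lt_genStart {N j : ℕ} (hj : j < genStart m w N) : 0 < walk m w j :=
  let ⟨_, _, h₁, h₂⟩ := exists_genStart_le_lt_succ hj
  walk_pos_of_genStart_le h₁ h₂

lemma isLeast_walk_eq_zero_iff {k : ℕ} :
    IsLeast {j | walk m w j = 0} k ↔ ∃ N, genSize m w N = 0 ∧ genStart m w N = k := by
  constructor
  · intro hk
    have hext : ∃ N, genSize m w N = 0 := by
      by_contra! hpos
      have hge : ∀ n, n ≤ genStart m w n := fun n => by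
        induction n with
        | zero => rfl
        | succ n ih => have := hpos n; rw [genStart_succ]; omega
      exact (walk_pos_of_lt_genStart (lt_of_lt_of_le k.lt_succ_self (hge (k + 1)))).ne' hk.1
    obtain ⟨N, hN⟩ := hext
    have hzero : walk m w (genStart m w N) = 0 := by rw [walk_genStart, hN]; rfl
    refine ⟨N, hN, le_antisymm ?_ (hk.2 hzero)⟩
    by_contra! hlt
    exact (walk_pos_of_lt_genStart hlt).ne' hk.1
  · rintro ⟨N, hN, rfl⟩
    refine ⟨by simp [walk_genStart, hN], fun j hj => ?_⟩
    by_contra! hlt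
    exact (walk_pos_of_lt_genStart hlt).ne' hj

lemma tsum_genSize {N : ℕ} (hN : genSize m w N = 0) :
    ∑' n, (genSize m w n : ℕ∞) = genStart m w N := by
  rw [tsum_eq_sum (s := range N) fun n hn => by
    simp [(genSize_eq_zero_of_le hN (not_lt.1 (mem_range.not.1 hn))).1]]
  exact_mod_cast (genStart_eq_sum N).symm

lemma isLeast_walk_eq_zero_congr {w' : ℕ → ℕ} {k : ℕ} (h : ∀ i < k, w i = w' i) :
    IsLeast {j | walk m w j = 0} k ↔ IsLeast {j | walk m w' j = 0} k := by
  have key : ∀ {u u' : ℕ → ℕ}, (∀ i < k, u i = u' i) →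
      IsLeast {j | walk m u j = 0} k → IsLeast {j | walk m u' j = 0} k := by
    intro u u' h ⟨hk, hmin⟩
    refine ⟨(walk_congr h).symm.trans hk, fun j hj => ?_⟩
    by_contra! hjk
    exact hjk.not_ge (hmin ((walk_congr fun i hi => h i (hi.trans hjk)).trans hj))
  exact ⟨key h, key fun i hi => (h i hi).symm⟩

end Exploration

def FirstHitWord (m k : ℕ) : Type :=
  {w : ℕ → ℕ // IsLeast {j | walk m w j = 0} k ∧ ∀ j, k ≤ j → w j = 0}

namespace FirstHitWord

variable {m k : ℕ}

lemma ext_of_eqOn {w w' : FirstHitWord m k} (h : ∀ j < k, w.1 j = w'.1 j) : w = w' :=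
  Subtype.ext <| funext fun j =>
    if hj : j < k then h j hj else by rw [w.2.2 j (not_lt.1 hj), w'.2.2 j (not_lt.1 hj)]

instance : Countable (FirstHitWord m k) :=
  Function.Injective.countable (f := fun w j => w.1 (j : Fin k).1) fun _ _ h =>
    ext_of_eqOn fun j hj => congrFun h ⟨j, hj⟩

end FirstHitWord

lemma isLeast_walk_eq_zero_iff_exists_firstHitWord {m k : ℕ} {u : ℕ → ℕ} :
    IsLeast {j | walk m u j = 0} k ↔ ∃ w : FirstHitWord m k, ∀ j ∈ range k, u j = w.1 j := by
  constructor
  · intro hu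
    have hagree : ∀ j < k, u j = if j < k then u j else 0 := fun j hj => (if_pos hj).symm
    exact ⟨⟨fun j => if j < k then u j else 0, (isLeast_walk_eq_zero_congr hagree).1 hu,
      fun j hj => if_neg (by omega)⟩, fun j hj => hagree j (mem_range.1 hj)⟩
  · rintro ⟨w, hw⟩
    exact (isLeast_walk_eq_zero_congr fun j hj => hw j (mem_range.2 hj)).2 w.2.1

def generationSize (m : ℕ) (v : ℕ × ℕ → ℕ) : ℕ → ℕ
  | 0 => m
  | n + 1 => ∑ i ∈ range (generationSize m v n), v (n, i)

/-- `w` lists the offspring numbers `v (n, i)` of the population breadth first; its letters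
after the extinction are unconstrained. -/
def IsBreadthFirstWord (m : ℕ) (v : ℕ × ℕ → ℕ) (w : ℕ → ℕ) : Prop :=
  ∀ n, ∀ i < genSize m w n, v (n, i) = w (genStart m w n + i)

section Population

variable {m k : ℕ} {v : ℕ × ℕ → ℕ} {w : ℕ → ℕ}

lemma eq_generationSize {x : ℕ → ℕ} (h₀ : x 0 = m)
    (hsucc : ∀ n, x (n + 1) = ∑ i ∈ range (x n), v (n, i)) : x = generationSize m v := by
  funext n
  induction n with
  | zero => exact h₀
  | succ n ih => rw [hsucc, ih, generationSize]

lemma generationSize_eq_zero_of_le {N n : ℕ} (hN : generationSize m v N = 0) (hn : N ≤ n) :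
    generationSize m v n = 0 := by
  induction n, hn using Nat.le_induction with
  | base => exact hN
  | succ n _ ih => simp [generationSize, ih]

lemma IsBreadthFirstWord.genSize_eq (hw : IsBreadthFirstWord m v w) :
    genSize m w = generationSize m v :=
  eq_generationSize rfl fun n =>
    (genSize_succ n).trans (sum_congr rfl fun i hi => (hw n i (mem_range.1 hi)).symm)

lemma exists_word_of_blocks (x : ℕ → ℕ) (v : ℕ × ℕ → ℕ) (N : ℕ) :
    ∃ w : ℕ → ℕ, (∀ n < N, ∀ i < x n, w (∑ l ∈ range n, x l + i) = v (n, i)) ∧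
      ∀ j, ∑ l ∈ range N, x l ≤ j → w j = 0 := by
  induction N with
  | zero => exact ⟨0, by simp, fun _ _ => rfl⟩
  | succ N ih =>
    obtain ⟨w, hw, hw₀⟩ := ih
    set B := ∑ l ∈ range N, x l
    have hB : ∀ n < N, ∀ i < x n, ∑ l ∈ range n, x l + i < B := fun n hn i hi =>
      calc ∑ l ∈ range n, x l + i < ∑ l ∈ range (n + 1), x l := by rw [sum_range_succ]; omega
        _ ≤ B := sum_le_sum_of_subset (range_subset_range.2 hn)
    refine ⟨fun j => if j < B then w j else if j < B + x N then v (N, j - B) else 0,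
      fun n hn i hi => ?_, fun j hj => ?_⟩
    · rcases Nat.lt_succ_iff_lt_or_eq.1 hn with hn | rfl
      · simp [hB n hn i hi, hw n hn i hi]
      · simp [B, hi]
    · rw [sum_range_succ] at hj
      simp [show ¬j < B by omega, show ¬j < B + x N by omega]

lemma exists_isBreadthFirstWord {N : ℕ} (hN : generationSize m v N = 0) :
    ∃ w, IsBreadthFirstWord m v w ∧ ∀ j, genStart m w N ≤ j → w j = 0 := by
  obtain ⟨w, hw, hw₀⟩ := exists_word_of_blocks (generationSize m v) v N
  have hgen : ∀ n, genSize m w n = generationSize m v n ∧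
      genStart m w n = ∑ l ∈ range n, generationSize m v l := by
    intro n
    induction n with
    | zero => simp [generationSize]
    | succ n ih =>
      refine ⟨?_, by rw [genStart_succ, sum_range_succ, ih.1, ih.2]⟩
      rw [genSize_succ, generationSize, ih.1, ih.2]
      refine sum_congr rfl fun i hi => hw n ?_ i (mem_range.1 hi)
      by_contra! hn
      simp [generationSize_eq_zero_of_le hN hn] at hi
  refine ⟨w, fun n i hi => ?_, fun j hj => hw₀ j ((hgen N).2 ▸ hj)⟩
  rw [(hgen n).1] at hi
  have hn : n < N := by
    by_contra! hn
    simp [generationSize_eq_zero_of_le hN hn] at hi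
  rw [(hgen n).2, hw n hn i hi]

lemma FirstHitWord.eq_of_isBreadthFirstWord {w w' : FirstHitWord m k}
    (hw : IsBreadthFirstWord m v w.1) (hw' : IsBreadthFirstWord m v w'.1) : w = w' := by
  obtain ⟨N, hN, hk⟩ := isLeast_walk_eq_zero_iff.1 w.2.1
  have hsize : genSize m w'.1 = genSize m w.1 := hw'.genSize_eq.trans hw.genSize_eq.symm
  have hstart : genStart m w'.1 = genStart m w.1 := funext fun n => by
    rw [genStart_eq_sum, genStart_eq_sum, hsize]
  refine FirstHitWord.ext_of_eqOn fun j hj => ?_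
  obtain ⟨n, -, h₁, h₂⟩ := exists_genStart_le_lt_succ (hk ▸ hj)
  obtain ⟨i, rfl⟩ := Nat.exists_eq_add_of_le h₁
  have hi : i < genSize m w.1 n := by rw [genStart_succ] at h₂; omega
  rw [← hw n i hi, hw' n i (hsize ▸ hi), hstart]

lemma tsum_generationSize_eq_natCast_iff :
    ∑' n, (generationSize m v n : ℕ∞) = k ↔
      ∃ w : FirstHitWord m k, IsBreadthFirstWord m v w.1 := by
  constructor
  · intro htot
    obtain ⟨N, hN⟩ := ENat.exists_eq_zero_of_tsum_ne_top (htot ▸ ENat.natCast_ne_top k)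
    obtain ⟨w, hw, hw₀⟩ := exists_isBreadthFirstWord hN
    rw [← hw.genSize_eq] at hN htot
    have hk : genStart m w N = k := by exact_mod_cast (tsum_genSize hN).symm.trans htot
    exact ⟨⟨w, isLeast_walk_eq_zero_iff.2 ⟨N, hN, hk⟩, hk ▸ hw₀⟩, hw⟩
  · rintro ⟨w, hw⟩
    obtain ⟨N, hN, hk⟩ := isLeast_walk_eq_zero_iff.1 w.2.1
    rw [← hw.genSize_eq, tsum_genSize hN, hk]

end Population

def blockIndex (m : ℕ) (w : ℕ → ℕ) (N : ℕ) : Finset (ℕ × ℕ) :=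
  (range N).biUnion fun n => {n} ×ˢ range (genSize m w n)

section Blocks

variable {m N : ℕ} {w : ℕ → ℕ}

lemma mem_blockIndex {p : ℕ × ℕ} :
    p ∈ blockIndex m w N ↔ p.1 ∈ range N ∧ p.2 ∈ range (genSize m w p.1) := by
  obtain ⟨n, i⟩ := p
  simp [blockIndex]

lemma prod_blockIndex {M : Type*} [CommMonoid M] (f : ℕ → M) :
    ∏ p ∈ blockIndex m w N, f (genStart m w p.1 + p.2) = ∏ j ∈ range (genStart m w N), f j := by
  rw [prod_finset_product _ (range N) (fun n => range (genSize m w n)) fun _ => mem_blockIndex]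
  induction N with
  | zero => simp
  | succ N ih => rw [prod_range_succ, ih, genStart_succ, prod_range_add]

lemma isBreadthFirstWord_iff_forall_mem_blockIndex {v : ℕ × ℕ → ℕ}
    (hN : genSize m w N = 0) :
    IsBreadthFirstWord m v w ↔ ∀ p ∈ blockIndex m w N, v p = w (genStart m w p.1 + p.2) := by
  simp only [mem_blockIndex, mem_range, and_imp, Prod.forall]
  refine ⟨fun hw n i _ hi => hw n i hi, fun hw n i hi => hw n i ?_ hi⟩
  by_contra! hn
  simp [(genSize_eq_zero_of_le hN hn).1] at hi

end Blocks

section Probability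

variable {Ω : Type*} {mΩ : MeasurableSpace Ω} {μ : Measure Ω} {A : ℕ → ℝ≥0∞} {m k : ℕ}

lemma measure_isBreadthFirstWord {V : ℕ × ℕ → Ω → ℕ} (hV : iIndepFun V μ)
    (hA : ∀ p n, μ {ω | V p ω = n} = A n) {w : ℕ → ℕ} {N : ℕ} (hN : genSize m w N = 0) :
    μ {ω | IsBreadthFirstWord m (V · ω) w} = ∏ j ∈ range (genStart m w N), A (w j) := by
  simp_rw [isBreadthFirstWord_iff_forall_mem_blockIndex hN]
  rw [measure_forall_mem_eq_prod hV hA, prod_blockIndex fun j => A (w j)]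

lemma measurableSet_isBreadthFirstWord {V : ℕ × ℕ → Ω → ℕ} (hV : ∀ p, Measurable (V p))
    {w : ℕ → ℕ} {N : ℕ} (hN : genSize m w N = 0) :
    MeasurableSet {ω | IsBreadthFirstWord m (V · ω) w} := by
  simp_rw [isBreadthFirstWord_iff_forall_mem_blockIndex hN]
  exact measurableSet_forall_mem_eq hV _ _

lemma setOf_tsum_generationSize_eq (V : ℕ × ℕ → Ω → ℕ) (k : ℕ) :
    {ω | ∑' n, (generationSize m (V · ω) n : ℕ∞) = k} =
      ⋃ w : FirstHitWord m k, {ω | IsBreadthFirstWord m (V · ω) w.1} := by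
  ext ω
  simp [tsum_generationSize_eq_natCast_iff]

lemma measurableSet_setOf_isBreadthFirstWord {V : ℕ × ℕ → Ω → ℕ}
    (hVmeas : ∀ p, Measurable (V p)) (w : FirstHitWord m k) :
    MeasurableSet {ω | IsBreadthFirstWord m (V · ω) w.1} :=
  measurableSet_isBreadthFirstWord hVmeas (isLeast_walk_eq_zero_iff.1 w.2.1).choose_spec.1

lemma pairwise_disjoint_setOf_isBreadthFirstWord (V : ℕ × ℕ → Ω → ℕ) :
    Pairwise (Disjoint on fun w : FirstHitWord m k => {ω | IsBreadthFirstWord m (V · ω) w.1}) :=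
  fun _ _ hne => Set.disjoint_left.2 fun ω hw hw' =>
    hne (FirstHitWord.eq_of_isBreadthFirstWord (v := (V · ω)) hw hw')

lemma measure_tsum_generationSize_eq {V : ℕ × ℕ → Ω → ℕ} (hVmeas : ∀ p, Measurable (V p))
    (hV : iIndepFun V μ) (hA : ∀ p n, μ {ω | V p ω = n} = A n) (k : ℕ) :
    μ {ω | ∑' n, (generationSize m (V · ω) n : ℕ∞) = k} =
      ∑' w : FirstHitWord m k, ∏ j ∈ range k, A (w.1 j) := by
  rw [setOf_tsum_generationSize_eq, measure_iUnion (pairwise_disjoint_setOf_isBreadthFirstWord V)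
    (measurableSet_setOf_isBreadthFirstWord hVmeas)]
  refine tsum_congr fun w => ?_
  obtain ⟨N, hN, hk⟩ := isLeast_walk_eq_zero_iff.1 w.2.1
  rw [measure_isBreadthFirstWord hV hA hN, hk]

lemma measurableSet_tsum_generationSize_eq {V : ℕ × ℕ → Ω → ℕ}
    (hVmeas : ∀ p, Measurable (V p)) (k : ℕ) :
    MeasurableSet {ω | ∑' n, (generationSize m (V · ω) n : ℕ∞) = k} := by
  rw [setOf_tsum_generationSize_eq]
  exact .iUnion (measurableSet_setOf_isBreadthFirstWord hVmeas)

lemma setOf_isLeast_walk_eq_zero (W : ℕ → Ω → ℕ) (k : ℕ) :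
    {ω | IsLeast {j | walk m (W · ω) j = 0} k} =
      ⋃ w : FirstHitWord m k, {ω | ∀ j ∈ range k, W j ω = w.1 j} := by
  ext ω
  simp [isLeast_walk_eq_zero_iff_exists_firstHitWord]

lemma pairwise_disjoint_setOf_forall_mem_range_eq (W : ℕ → Ω → ℕ) :
    Pairwise (Disjoint on fun w : FirstHitWord m k => {ω | ∀ j ∈ range k, W j ω = w.1 j}) :=
  fun _ _ hne => Set.disjoint_left.2 fun _ hw hw' => hne <| FirstHitWord.ext_of_eqOn
    fun j hj => (hw j (mem_range.2 hj)).symm.trans (hw' j (mem_range.2 hj))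

lemma measure_isLeast_walk_eq_zero {W : ℕ → Ω → ℕ} (hWmeas : ∀ i, Measurable (W i))
    (hW : iIndepFun W μ) (hA : ∀ i n, μ {ω | W i ω = n} = A n) (k : ℕ) :
    μ {ω | IsLeast {j | walk m (W · ω) j = 0} k} =
      ∑' w : FirstHitWord m k, ∏ j ∈ range k, A (w.1 j) := by
  rw [setOf_isLeast_walk_eq_zero, measure_iUnion (pairwise_disjoint_setOf_forall_mem_range_eq W)
    fun w => measurableSet_forall_mem_eq hWmeas _ _]
  exact tsum_congr fun w => measure_forall_mem_eq_prod hW hA _ _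

lemma measurableSet_isLeast_walk_eq_zero {W : ℕ → Ω → ℕ} (hWmeas : ∀ i, Measurable (W i))
    (k : ℕ) : MeasurableSet {ω | IsLeast {j | walk m (W · ω) j = 0} k} := by
  rw [setOf_isLeast_walk_eq_zero]
  exact .iUnion fun w => measurableSet_forall_mem_eq hWmeas _ _

end Probability

end GaltonWatson

open GaltonWatson in
theorem total_progeny_eq_hitting_time_general
    {Ω : Type*} {mΩ : MeasurableSpace Ω} (μ : Measure Ω) [IsProbabilityMeasure μ]
    (A : ℕ → ENNReal)
    (m : ℕ)
    -- the offspring variables of the branching process: `V n i` is the number of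
    -- children of the `i`-th individual of generation `n`
    (V : ℕ × ℕ → Ω → ℕ) (hVmeas : ∀ k, Measurable (V k))
    (hVindep : iIndepFun V μ)
    (hVdist : ∀ k n, μ {ω | V k ω = n} = A n)
    -- the generation sizes: `X 0 = m`, `X (n+1) = ` sum of `X n` copies of `V`
    (X : ℕ → Ω → ℕ)
    (hX0 : ∀ ω, X 0 ω = m)
    (hXsucc : ∀ n ω, X (n + 1) ω = ∑ i ∈ Finset.range (X n ω), V (n, i) ω)
    -- the steps of the random walk, i.i.d. with the same distribution `A`
    (W : ℕ → Ω → ℕ) (hWmeas : ∀ i, Measurable (W i))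
    (hWindep : iIndepFun W μ)
    (hWdist : ∀ i n, μ {ω | W i ω = n} = A n)
    (S : ℕ → Ω → ℤ)
    (hS : ∀ n ω, S n ω = (m : ℤ) + ∑ i ∈ Finset.range n, ((W i ω : ℤ) - 1))
    -- total progeny and first hitting time of the origin, valued in `ℕ∞`
    (Y T : Ω → ℕ∞)
    (hY : ∀ ω, Y ω = ∑' n, (X n ω : ℕ∞))
    (hT : ∀ ω, T ω = sInf ((fun n : ℕ => (n : ℕ∞)) '' {n | S n ω = 0})) :
    (∀ k : ℕ∞, μ {ω | Y ω = k} = μ {ω | T ω = k}) ∧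
      μ {ω | Y ω ≠ ⊤} = μ {ω | ∃ n, S n ω = 0} := by
  have hX (ω : Ω) : (X · ω) = generationSize m (V · ω) := eq_generationSize (hX0 ω) (hXsucc · ω)
  have hYset (k : ℕ) :
      {ω | Y ω = k} = {ω | ∑' n, (generationSize m (V · ω) n : ℕ∞) = k} := by
    simp_rw [hY, ← hX]
  have hTset (k : ℕ) : {ω | T ω = k} = {ω | IsLeast {j | walk m (W · ω) j = 0} k} := by
    simp_rw [hT, ENat.sInf_image_natCast_eq_natCast_iff, hS, walk]
  have hYmeas (k : ℕ) : MeasurableSet {ω | Y ω = k} :=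
    hYset k ▸ measurableSet_tsum_generationSize_eq hVmeas k
  have hTmeas (k : ℕ) : MeasurableSet {ω | T ω = k} :=
    hTset k ▸ measurableSet_isLeast_walk_eq_zero hWmeas k
  have hlaw (k : ℕ) : μ {ω | Y ω = k} = μ {ω | T ω = k} := by
    rw [hYset, hTset, measure_tsum_generationSize_eq hVmeas hVindep hVdist,
      measure_isLeast_walk_eq_zero hWmeas hWindep hWdist]
  refine ⟨fun k => ?_, ?_⟩
  · induction k using ENat.recTopCoe with
    | top => exact measure_eq_top_eq_of_forall_natCast hYmeas hTmeas hlaw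
    | coe k => exact hlaw k
  · have hreach : {ω | ∃ n, S n ω = 0} = {ω | T ω ≠ ⊤} := by
      simp_rw [hT, ENat.sInf_image_natCast_ne_top_iff]
      rfl
    rw [hreach, measure_ne_top_eq_tsum hYmeas, measure_ne_top_eq_tsum hTmeas, tsum_congr hlaw]

/-- The total progeny of a Galton–Watson process with offspring distribution `A`
started from `m ≥ 1` individuals has the same distribution as the first hitting time
of `0` by the random walk `S_n = m + Σ_{i=1}^n (V_i − 1)` with i.i.d. steps `V_i − 1`,
`V_i ∼ A`; in particular the total progeny is finite iff the walk reaches `0`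
(with the same probability). -/
theorem total_progeny_eq_hitting_time
    {Ω : Type*} {mΩ : MeasurableSpace Ω} (μ : Measure Ω) [IsProbabilityMeasure μ]
    (A : ℕ → ENNReal) (hA : ∑' n, A n = 1)
    (m : ℕ) (hm : 1 ≤ m)
    -- the offspring variables of the branching process: `V n i` is the number of
    -- children of the `i`-th individual of generation `n`
    (V : ℕ × ℕ → Ω → ℕ) (hVmeas : ∀ k, Measurable (V k))
    (hVindep : iIndepFun V μ)
    (hVdist : ∀ k n, μ {ω | V k ω = n} = A n)
    -- the generation sizes: `X 0 = m`, `X (n+1) = ` sum of `X n` copies of `V`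
    (X : ℕ → Ω → ℕ)
    (hX0 : ∀ ω, X 0 ω = m)
    (hXsucc : ∀ n ω, X (n + 1) ω = ∑ i ∈ Finset.range (X n ω), V (n, i) ω)
    -- the steps of the random walk, i.i.d. with the same distribution `A`
    (W : ℕ → Ω → ℕ) (hWmeas : ∀ i, Measurable (W i))
    (hWindep : iIndepFun W μ)
    (hWdist : ∀ i n, μ {ω | W i ω = n} = A n)
    (S : ℕ → Ω → ℤ)
    (hS : ∀ n ω, S n ω = (m : ℤ) + ∑ i ∈ Finset.range n, ((W i ω : ℤ) - 1))
    -- total progeny and first hitting time of the origin, valued in `ℕ∞`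
    (Y T : Ω → ℕ∞)
    (hY : ∀ ω, Y ω = ∑' n, (X n ω : ℕ∞))
    (hT : ∀ ω, T ω = sInf ((fun n : ℕ => (n : ℕ∞)) '' {n | S n ω = 0})) :
    (∀ k : ℕ∞, μ {ω | Y ω = k} = μ {ω | T ω = k}) ∧
      μ {ω | Y ω ≠ ⊤} = μ {ω | ∃ n, S n ω = 0} :=
  total_progeny_eq_hitting_time_general (mΩ := mΩ) μ A m V hVmeas hVindep hVdist X hX0 hXsucc W
    hWmeas hWindep hWdist S hS Y T hY hT
end
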